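/- arXiv:2108.06284 — 4 statements merged into one kernel-verified Lean document; each statement's English description precedes it below -/
import Mathlib

section
/- Let ξ ∈ ℝ with −6 < ξ < 6. Then every complex solution z of 3z⁴ + ξz² + 3 = 0 satisfies |z| = 1, Re z ≠ 0 and Im z ≠ 0; that is, for −6 < ξ < 6 the four non-fixed saddle points of the phase function θ lie on the unit circle and are away from both the real and the imaginary axes. -/
/-!
Put `w = z²`. For `|ξ| < 6` the quadratic `3w² + ξw + 3` has negative discriminant, so `w` is not
real. Then `w` and `w̄` are the two roots, so by Vieta `2 Re w = -ξ/3` (the imaginary part of the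
equation) and `|w|² = w w̄ = 1` (its real part). Finally `Im w = 2 Re z Im z ≠ 0` keeps `z` off
both axes.
-/

namespace Complex

variable {a b c : ℝ} {w : ℂ}

theorem im_ne_zero_of_quadratic_eq_zero (hdisc : discrim a b c < 0)
    (hw : (a : ℂ) * w ^ 2 + b * w + c = 0) : w.im ≠ 0 := by
  intro him
  have hreal : a * (w.re * w.re) + b * w.re + c = 0 := by
    simpa [him, sq] using congrArg re hw
  have := discrim_eq_sq_of_quadratic_eq_zero hreal
  nlinarith [sq_nonneg (2 * a * w.re + b)]

theorem mul_normSq_eq_of_quadratic_eq_zero (him : w.im ≠ 0)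
    (hw : (a : ℂ) * w ^ 2 + b * w + c = 0) : a * normSq w = c := by
  have hre := congrArg re hw
  have him' := congrArg im hw
  simp only [sq, add_re, add_im, mul_re, mul_im, ofReal_re, ofReal_im, zero_re, zero_im] at hre him'
  have hvieta : 2 * a * w.re + b = 0 :=
    (mul_eq_zero.mp (by linear_combination him' : (2 * a * w.re + b) * w.im = 0)).resolve_right him
  rw [normSq_apply]
  linear_combination -hre + w.re * hvieta

end Complex

/-- For −6 < ξ < 6, every complex solution of 3z⁴ + ξz² + 3 = 0 lies on the unit circle
and is away from both the real and the imaginary axes. -/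
theorem stmt_2 (ξ : ℝ) (h1 : -6 < ξ) (h2 : ξ < 6) (z : ℂ)
    (hz : 3*z^4 + (ξ : ℂ)*z^2 + 3 = 0) :
    ‖z‖ = 1 ∧ z.re ≠ 0 ∧ z.im ≠ 0 := by
  have hquad : ((3 : ℝ) : ℂ) * (z ^ 2) ^ 2 + ξ * z ^ 2 + ((3 : ℝ) : ℂ) = 0 := by
    push_cast
    linear_combination hz
  have hdisc : discrim 3 ξ 3 < 0 := by
    rw [discrim]
    nlinarith
  have him := Complex.im_ne_zero_of_quadratic_eq_zero hdisc hquad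
  have hnormSq := Complex.mul_normSq_eq_of_quadratic_eq_zero him hquad
  have hnorm : ‖z‖ ^ 4 = 1 := by
    rw [show 4 = 2 * 2 by rfl, pow_mul, ← norm_pow, Complex.sq_norm]
    linarith
  rw [show (z ^ 2).im = 2 * z.re * z.im by rw [sq, Complex.mul_im]; ring,
    mul_ne_zero_iff, mul_ne_zero_iff] at him
  exact ⟨(pow_eq_one_iff_of_nonneg (norm_nonneg z) (by norm_num)).mp hnorm, him.1.2, him.2⟩
end

section
/- Let ξ ∈ ℝ with ξ < −6 and let φ ∈ (0, π/3). Set α = 3 − (ξ + 3)/(1 + 2 cos(2φ)) and l₁ = (√α − √(α − 4))/2. Then α > 4, and for every l with 0 < l < l₁ one has Im θ(l e^{iφ}) > 0 and Im θ(l e^{−iφ}) < 0. -/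
/-! On the ray `z = l e^{iφ}` the imaginary part of `θ` factors as
`½ (l + 1/l) sin φ · ((1 + 2 cos 2φ)((1/l - l)² + 1) + ξ + 3)`.
Writing `D = 1 + 2 cos 2φ > 0`, the definition of `α` gives `ξ + 3 = (3 - α) D`,
so the last factor is `D ((1/l - l)² + 4 - α)`. Since `l₁` is the positive root of
`1/l - l = √(α - 4)` and `1/l - l` is decreasing, this factor is positive for `0 < l < l₁`;
the sign of `Im θ` is then that of `sin φ`. -/

open Complex

noncomputable def theta (ξ : ℝ) (z : ℂ) : ℂ :=
  (1/2 : ℂ) * (z - 1/z) * ((ξ : ℂ) + 2 + (z + 1/z)^2)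

lemma theta_im_ofReal_mul_exp (ξ l φ : ℝ) (hl : l ≠ 0) :
    (theta ξ (l * exp (I * φ))).im =
      1/2 * (l + 1/l) * Real.sin φ * ((1 + 2 * Real.cos (2*φ)) * ((1/l - l)^2 + 1) + ξ + 3) := by
  set c := Real.cos φ
  set s := Real.sin φ
  have hcs : c^2 + s^2 = 1 := by rw [add_comm]; exact Real.sin_sq_add_cos_sq φ
  have hcsC : (c:ℂ)^2 + (s:ℂ)^2 = 1 := by exact_mod_cast hcs
  have hexp : exp (I * φ) = c + s * I := by
    rw [mul_comm, exp_mul_I, ← ofReal_cos, ← ofReal_sin]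
  have hinv : 1 / ((l:ℂ) * (c + s * I)) = 1/(l:ℂ) * (c - s * I) := by
    have hlC : (l:ℂ) ≠ 0 := by exact_mod_cast hl
    rw [one_div, inv_eq_of_mul_eq_one_right]
    field_simp
    linear_combination hcsC - (s:ℂ)^2 * I_sq
  rw [Real.cos_two_mul, theta, hexp, hinv]
  simp only [mul_im, mul_re, add_im, add_re, sub_im, sub_re, I_re, I_im, ofReal_re, ofReal_im,
    pow_two, one_re, one_im, div_re, div_im, normSq_apply, re_ofNat, im_ofNat]
  field_simp
  linear_combination (s * (-4*l^6 + 4*l^8 + 4*l^10 - 4*l^12)) * hcs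

lemma one_add_two_mul_cos_two_mul_pos {φ : ℝ} (hφ : φ ∈ Set.Ioo 0 (Real.pi/3)) :
    0 < 1 + 2 * Real.cos (2*φ) := by
  have hcos : Real.cos (2 * (Real.pi/3)) < Real.cos (2*φ) :=
    Real.cos_lt_cos_of_nonneg_of_le_pi (by linarith [hφ.1]) (by linarith [Real.pi_pos])
      (by linarith [hφ.2])
  have : Real.cos (2 * (Real.pi/3)) = -(1/2) := by
    rw [show 2 * (Real.pi/3) = Real.pi - Real.pi/3 by ring, Real.cos_pi_sub,
      Real.cos_pi_div_three]
  linarith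

lemma four_lt_three_sub_div {ξ D : ℝ} (hξ : ξ < -6) (hD : 0 < D) (hD3 : D ≤ 3) :
    4 < 3 - (ξ + 3) / D := by
  have : (ξ + 3) / D < -1 := by rw [div_lt_iff₀ hD]; linarith
  linarith

lemma sub_four_lt_sq_one_div_sub {a l : ℝ} (ha : 4 ≤ a) (hl : 0 < l)
    (hll₁ : l < (√a - √(a - 4)) / 2) : a - 4 < (1/l - l)^2 := by
  set l₁ := (√a - √(a - 4)) / 2
  have hmul : l₁ * ((√a + √(a - 4)) / 2) = 1 := by
    linear_combination Real.sq_sqrt (by linarith : (0:ℝ) ≤ a) / 4 -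
      Real.sq_sqrt (by linarith : (0:ℝ) ≤ a - 4) / 4
  have hroot : 1/l₁ - l₁ = √(a - 4) := by
    rw [← eq_one_div_of_mul_eq_one_right hmul]; ring
  have hgap : √(a - 4) < 1/l - l := by
    have := one_div_lt_one_div_of_lt hl hll₁
    linarith
  calc a - 4 = √(a - 4)^2 := (Real.sq_sqrt (by linarith)).symm
    _ < (1/l - l)^2 := by gcongr

lemma mul_add_pos_of_sub_four_lt {ξ D α u : ℝ} (hD : 0 < D) (hα : α = 3 - (ξ + 3) / D)
    (hu : α - 4 < u^2) : 0 < D * (u^2 + 1) + ξ + 3 := by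
  have hξ : ξ + 3 = (3 - α) * D := by rw [hα]; field_simp; ring
  have : 0 < D * (u^2 + 4 - α) := mul_pos hD (by linarith)
  linarith

/-- For ξ < −6 and φ ∈ (0, π/3), setting α = 3 − (ξ+3)/(1 + 2cos 2φ) and
l₁ = (√α − √(α−4))/2, one has α > 4 and for every 0 < l < l₁:
Im θ(l e^{iφ}) > 0 and Im θ(l e^{−iφ}) < 0. -/
theorem stmt_8 (ξ φ : ℝ) (hξ : ξ < -6) (hφ : φ ∈ Set.Ioo 0 (Real.pi/3))
    (θ : ℂ → ℂ)
    (hθ : θ = fun z : ℂ => (1/2 : ℂ) * (z - 1/z) * ((ξ : ℂ) + 2 + (z + 1/z)^2))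
    (α l₁ : ℝ)
    (hα : α = 3 - (ξ + 3) / (1 + 2 * Real.cos (2*φ)))
    (hl₁ : l₁ = (Real.sqrt α - Real.sqrt (α - 4)) / 2) :
    4 < α ∧
    ∀ l : ℝ, 0 < l → l < l₁ →
      0 < (θ ((l : ℂ) * Complex.exp (Complex.I * (φ : ℂ)))).im ∧
      (θ ((l : ℂ) * Complex.exp (-(Complex.I * (φ : ℂ))))).im < 0 := by
  have hθ' : θ = theta ξ := hθ
  have hD := one_add_two_mul_cos_two_mul_pos hφ
  have hα4 : 4 < α :=
    hα ▸ four_lt_three_sub_div hξ hD (by linarith [Real.cos_le_one (2*φ)])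
  refine ⟨hα4, fun l hl hll₁ => ?_⟩
  have hbracket := mul_add_pos_of_sub_four_lt hD hα
    (sub_four_lt_sq_one_div_sub hα4.le hl (hl₁ ▸ hll₁))
  have hsin : 0 < Real.sin φ :=
    Real.sin_pos_of_pos_of_lt_pi hφ.1 (by linarith [hφ.2, Real.pi_pos])
  have hpos : 0 < 1/2 * (l + 1/l) * Real.sin φ *
      ((1 + 2 * Real.cos (2*φ)) * ((1/l - l)^2 + 1) + ξ + 3) := by
    positivity
  have hneg : -(I * (φ:ℂ)) = I * ((-φ : ℝ) : ℂ) := by push_cast; ring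
  rw [hθ', hneg, theta_im_ofReal_mul_exp ξ l φ hl.ne', theta_im_ofReal_mul_exp ξ l (-φ) hl.ne']
  simp only [Real.sin_neg, mul_neg, Real.cos_neg, neg_mul]
  exact ⟨hpos, by linarith⟩
end

section
/- For every ξ ∈ ℝ, every φ with 0 < φ ≤ π/4, and every l > 0, the phase function satisfies Im θ(l e^{iφ}) ≥ (1/2) F(l) sin φ · (ξ + F(l)²) and Im θ(l e^{−iφ}) ≤ −(1/2) F(l) sin φ · (ξ + F(l)²), where F(l) = l + 1/l. In particular, if ξ > 0 then Im θ > 0 on the whole ray {l e^{iφ} : l > 0} and Im θ < 0 on {l e^{−iφ} : l > 0}. -/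
/-!
Writing `F = l + 1/l` and `z = l e^{iφ}`, a direct expansion (using `sin² φ + cos² φ = 1`) gives
`Im θ(z) = (1/2) F sin φ (ξ + F² + 2 cos(2φ) (F² - 3))`.
For `0 < φ ≤ π/4` both `sin φ` and `cos 2φ` are nonnegative, and `F ≥ 2`, so the correction term
`2 cos(2φ) (F² - 3)` is nonnegative. The lower ray is the case `-φ`, where `sin` changes sign and
`cos 2φ` does not.
-/

open Complex

noncomputable def phase (ξ : ℝ) (z : ℂ) : ℂ := (1/2) * (z - 1/z) * (ξ + 2 + (z + 1/z)^2)

lemma two_le_add_one_div {l : ℝ} (hl : 0 < l) : 2 ≤ l + 1/l := by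
  have hsq : l + 1/l - 2 = (l - 1)^2 / l := by field_simp; ring
  linarith [hsq, div_nonneg (sq_nonneg (l - 1)) hl.le]

lemma phase_im_ofReal_mul_exp (ξ φ : ℝ) {l : ℝ} (hl : l ≠ 0) :
    (phase ξ (l * exp (φ * I))).im = (1/2) * (l + 1/l) * Real.sin φ *
      (ξ + (l + 1/l)^2 + 2 * Real.cos (2 * φ) * ((l + 1/l)^2 - 3)) := by
  have hinv : 1 / ((l : ℂ) * exp (φ * I)) = ((1/l : ℝ) : ℂ) * exp ((-φ : ℝ) * I) := by
    rw [ofReal_neg, neg_mul, exp_neg]; push_cast; field_simp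
  rw [phase, hinv, exp_mul_I, exp_mul_I, ← ofReal_cos, ← ofReal_sin, ← ofReal_cos, ← ofReal_sin]
  simp only [mul_im, mul_re, add_im, add_re, sub_im, sub_re, ofReal_re, ofReal_im, I_re, I_im,
    pow_two, re_ofNat, im_ofNat, div_ofNat_re, div_ofNat_im, one_re, one_im]
  rw [Real.cos_neg, Real.sin_neg, Real.cos_two_mul]
  field_simp
  linear_combination Real.sin φ * (l^2 + l^4 - l^6 - 1) * Real.sin_sq_add_cos_sq φ

lemma two_mul_cos_two_mul_mul_nonneg {φ l : ℝ} (hl : 0 < l) (hc : 0 ≤ Real.cos (2 * φ)) :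
    0 ≤ 2 * Real.cos (2 * φ) * ((l + 1/l)^2 - 3) := by
  have := two_le_add_one_div hl
  have : 0 ≤ (l + 1/l)^2 - 3 := by nlinarith
  positivity

lemma le_phase_im_ofReal_mul_exp (ξ : ℝ) {φ l : ℝ} (hl : 0 < l) (hs : 0 ≤ Real.sin φ)
    (hc : 0 ≤ Real.cos (2 * φ)) :
    (1/2) * (l + 1/l) * Real.sin φ * (ξ + (l + 1/l)^2) ≤ (phase ξ (l * exp (φ * I))).im := by
  rw [phase_im_ofReal_mul_exp ξ φ hl.ne']
  have hF : 0 ≤ (1/2) * (l + 1/l) * Real.sin φ := by positivity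
  exact mul_le_mul_of_nonneg_left (by linarith [two_mul_cos_two_mul_mul_nonneg hl hc]) hF

lemma phase_im_ofReal_mul_exp_le (ξ : ℝ) {φ l : ℝ} (hl : 0 < l) (hs : Real.sin φ ≤ 0)
    (hc : 0 ≤ Real.cos (2 * φ)) :
    (phase ξ (l * exp (φ * I))).im ≤ (1/2) * (l + 1/l) * Real.sin φ * (ξ + (l + 1/l)^2) := by
  rw [phase_im_ofReal_mul_exp ξ φ hl.ne']
  have hF : (1/2) * (l + 1/l) * Real.sin φ ≤ 0 :=
    mul_nonpos_of_nonneg_of_nonpos (by positivity) hs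
  exact mul_le_mul_of_nonpos_left (by linarith [two_mul_cos_two_mul_mul_nonneg hl hc]) hF

/-- For every ξ, every φ ∈ (0, π/4] and every l > 0:
Im θ(l e^{iφ}) ≥ (1/2)F(l) sin φ (ξ + F(l)²) and Im θ(l e^{−iφ}) ≤ −(1/2)F(l) sin φ (ξ + F(l)²),
with F(l) = l + 1/l; in particular for ξ > 0 the imaginary part is positive on the upper ray
and negative on the lower ray. -/
theorem stmt_9 (ξ φ l : ℝ) (hφ1 : 0 < φ) (hφ2 : φ ≤ Real.pi/4) (hl : 0 < l)
    (θ : ℂ → ℂ)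
    (hθ : θ = fun z : ℂ => (1/2 : ℂ) * (z - 1/z) * ((ξ : ℂ) + 2 + (z + 1/z)^2)) :
    (1/2) * (l + 1/l) * Real.sin φ * (ξ + (l + 1/l)^2)
        ≤ (θ ((l : ℂ) * Complex.exp (Complex.I * (φ : ℂ)))).im ∧
    (θ ((l : ℂ) * Complex.exp (-(Complex.I * (φ : ℂ))))).im
        ≤ -((1/2) * (l + 1/l) * Real.sin φ * (ξ + (l + 1/l)^2)) ∧
    (0 < ξ →
      0 < (θ ((l : ℂ) * Complex.exp (Complex.I * (φ : ℂ)))).im ∧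
      (θ ((l : ℂ) * Complex.exp (-(Complex.I * (φ : ℂ))))).im < 0) := by
  obtain rfl : θ = phase ξ := hθ
  have hs : 0 < Real.sin φ := Real.sin_pos_of_pos_of_lt_pi hφ1 (by linarith [Real.pi_pos])
  have hc : 0 ≤ Real.cos (2 * φ) := Real.cos_nonneg_of_mem_Icc ⟨by linarith, by linarith⟩
  have hup := le_phase_im_ofReal_mul_exp ξ hl hs.le hc
  have hdown := phase_im_ofReal_mul_exp_le ξ (φ := -φ) hl (by simpa using hs.le)
    (by rwa [mul_neg, Real.cos_neg])
  rw [mul_comm I, show -((φ : ℂ) * I) = ((-φ : ℝ) : ℂ) * I by push_cast; ring]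
  rw [Real.sin_neg] at hdown
  refine ⟨hup, by linarith, fun hξ => ⟨?_, ?_⟩⟩
  · exact lt_of_lt_of_le (by positivity) hup
  · have : 0 < (1/2) * (l + 1/l) * Real.sin φ * (ξ + (l + 1/l)^2) := by positivity
    linarith
end

section
/- Let Γ ⊆ ℝ be a measurable set, let ρ ∈ [0, 1), and let r : ℝ → ℂ be measurable with |r(s)| ≤ ρ for all s ∈ Γ. Set ν(s) = −(1/(2π)) log(1 − |r(s)|²) ≥ 0 and assume that ν is integrable on Γ and that s ↦ ν(s)/s is integrable on Γ. Define δ(z) = exp(−i ∫_Γ ν(s)(1/(s − z) − 1/(2s)) ds) for Im z ≠ 0. Then for every z ∈ ℂ with Im z ≠ 0 one has (1 − ρ²)^{1/2} ≤ |δ(z)| ≤ (1 − ρ²)^{−1/2}. -/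
/-!
Since `‖exp w‖ = exp (re w)`, we have `log ‖δ(z)‖ = Im ∫_Γ ν(s) (1/(s - z) - 1/(2s)) ds`, and the
term `1/(2s)` is real, so only `ν(s) Im (s - z)⁻¹` contributes. Now `|Im (s - z)⁻¹|` is `π` times
the Cauchy density with location `Re z` and scale `|Im z|`, a probability density, while
`0 ≤ ν ≤ -log (1 - ρ²) / (2π)` on `Γ`. Hence `|log ‖δ(z)‖| ≤ -log (1 - ρ²) / 2`.
-/

open MeasureTheory Complex ProbabilityTheory
open scoped Real

lemma abs_im_inv_ofReal_sub (s : ℝ) (z : ℂ) :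
    |((s : ℂ) - z)⁻¹.im| = π * cauchyPDFReal z.re ‖z.im‖₊ s := by
  rw [inv_im, cauchyPDFReal_def, abs_div, abs_of_nonneg (normSq_nonneg _)]
  simp only [normSq_apply, sub_re, ofReal_re, sub_im, ofReal_im, zero_sub, coe_nnnorm,
    Real.norm_eq_abs, sq_abs, neg_neg]
  field_simp

lemma integrable_abs_im_inv_ofReal_sub (z : ℂ) :
    Integrable fun s : ℝ => |((s : ℂ) - z)⁻¹.im| := by
  simp_rw [abs_im_inv_ofReal_sub]
  exact (integrable_cauchyPDFReal _).const_mul π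

lemma integral_abs_im_inv_ofReal_sub {z : ℂ} (hz : z.im ≠ 0) :
    ∫ s : ℝ, |((s : ℂ) - z)⁻¹.im| = π := by
  simp_rw [abs_im_inv_ofReal_sub]
  rw [integral_const_mul, integral_cauchyPDFReal_eq_one _ (nnnorm_ne_zero_iff.mpr hz), mul_one]

lemma abs_setIntegral_mul_im_inv_ofReal_sub_le {Γ : Set ℝ} (hΓ : MeasurableSet Γ) {ν : ℝ → ℝ}
    {c : ℝ} (hc : 0 ≤ c) (hν : ∀ s ∈ Γ, |ν s| ≤ c) {z : ℂ} (hz : z.im ≠ 0) :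
    |∫ s in Γ, ν s * ((s : ℂ) - z)⁻¹.im| ≤ c * π := by
  have hP := integrable_abs_im_inv_ofReal_sub z
  calc |∫ s in Γ, ν s * ((s : ℂ) - z)⁻¹.im|
      ≤ ∫ s in Γ, c * |((s : ℂ) - z)⁻¹.im| := by
        rw [← Real.norm_eq_abs]
        refine norm_integral_le_of_norm_le (hP.const_mul c).integrableOn
          ((ae_restrict_iff' hΓ).mpr (.of_forall fun s hs => ?_))
        rw [Real.norm_eq_abs, abs_mul]
        exact mul_le_mul_of_nonneg_right (hν s hs) (abs_nonneg _)
    _ ≤ ∫ s : ℝ, c * |((s : ℂ) - z)⁻¹.im| :=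
        setIntegral_le_integral (hP.const_mul c) (.of_forall fun s => by positivity)
    _ = c * π := by rw [integral_const_mul, integral_abs_im_inv_ofReal_sub hz]

lemma integrableOn_ofReal_mul_inv_sub_sub_inv_two_mul {Γ : Set ℝ} {ν : ℝ → ℝ}
    (hν : IntegrableOn ν Γ) (hν' : IntegrableOn (fun s => ν s / s) Γ) {z : ℂ} (hz : z.im ≠ 0) :
    IntegrableOn (fun s : ℝ => (ν s : ℂ) * (1 / ((s : ℂ) - z) - 1 / (2 * (s : ℂ)))) Γ := by
  have hne (s : ℝ) : (s : ℂ) - z ≠ 0 := fun h => hz (by simpa using congrArg im h)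
  have hcauchy : IntegrableOn (fun s : ℝ => (ν s : ℂ) * ((s : ℂ) - z)⁻¹) Γ := by
    refine hν.ofReal.mul_bdd (c := |z.im|⁻¹) ?_ (.of_forall fun s => ?_)
    · exact (continuous_ofReal.sub continuous_const).inv₀ hne |>.aestronglyMeasurable
    · rw [norm_inv]
      exact inv_anti₀ (abs_pos.mpr hz) (by simpa using abs_im_le_norm ((s : ℂ) - z))
  have hhalf : IntegrableOn (fun s : ℝ => ((ν s / s / 2 : ℝ) : ℂ)) Γ := (hν'.div_const 2).ofReal
  refine (hcauchy.sub hhalf).congr (.of_forall fun s => ?_)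
  simp only [Pi.sub_apply]
  push_cast
  ring

lemma im_ofReal_mul_inv_sub_sub_inv_two_mul (ν s : ℝ) (z : ℂ) :
    ((ν : ℂ) * (1 / ((s : ℂ) - z) - 1 / (2 * (s : ℂ)))).im = ν * ((s : ℂ) - z)⁻¹.im := by
  have : 1 / (2 * (s : ℂ)) = ((1 / (2 * s) : ℝ) : ℂ) := by push_cast; rfl
  rw [im_ofReal_mul, sub_im, this, ofReal_im, sub_zero, one_div]

lemma abs_log_one_sub_sq_le {a ρ : ℝ} (ha : 0 ≤ a) (haρ : a ≤ ρ) (hρ : ρ < 1) :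
    |Real.log (1 - a ^ 2)| ≤ -Real.log (1 - ρ ^ 2) := by
  have hρ2 : 0 < 1 - ρ ^ 2 := by nlinarith
  rw [abs_of_nonpos (Real.log_nonpos (by nlinarith) (by nlinarith)), neg_le_neg_iff]
  exact Real.log_le_log hρ2 (by nlinarith)

lemma sqrt_le_exp_and_exp_le_inv_sqrt {q t : ℝ} (hq : 0 < q) (ht : |t| ≤ -Real.log q / 2) :
    √q ≤ Real.exp t ∧ Real.exp t ≤ (√q)⁻¹ := by
  rw [← Real.exp_log (Real.sqrt_pos.mpr hq), ← Real.exp_neg, Real.log_sqrt hq.le,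
    Real.exp_le_exp, Real.exp_le_exp]
  constructor <;> linarith [abs_le.mp ht]

theorem stmt_11_general (Γ : Set ℝ) (hΓ : MeasurableSet Γ) (ρ : ℝ) (hρ0 : 0 ≤ ρ) (hρ1 : ρ < 1)
    (r : ℝ → ℂ) (hrρ : ∀ s ∈ Γ, ‖r s‖ ≤ ρ)
    (ν : ℝ → ℝ)
    (hν : ν = fun s => -(1/(2*Real.pi)) * Real.log (1 - ‖r s‖^2))
    (hint1 : IntegrableOn ν Γ)
    (hint2 : IntegrableOn (fun s => ν s / s) Γ)
    (δ : ℂ → ℂ)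
    (hδ : δ = fun z => Complex.exp (-Complex.I *
      ∫ s in Γ, (ν s : ℂ) * (1/((s : ℂ) - z) - 1/(2*(s : ℂ)))))
    (z : ℂ) (hz : z.im ≠ 0) :
    Real.sqrt (1 - ρ^2) ≤ ‖δ z‖ ∧
      ‖δ z‖ ≤ (Real.sqrt (1 - ρ^2))⁻¹ := by
  have hq : 0 < 1 - ρ ^ 2 := by nlinarith
  have hνc : ∀ s ∈ Γ, |ν s| ≤ -Real.log (1 - ρ ^ 2) / (2 * π) := fun s hs => by
    rw [hν, abs_mul, abs_neg, abs_of_pos (by positivity), one_div_mul_eq_div]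
    gcongr
    exact abs_log_one_sub_sq_le (norm_nonneg (r s)) (hrρ s hs) hρ1
  have him : (∫ s in Γ, (ν s : ℂ) * (1 / ((s : ℂ) - z) - 1 / (2 * (s : ℂ)))).im =
      ∫ s in Γ, ν s * ((s : ℂ) - z)⁻¹.im := by
    rw [← imCLM_apply, ← imCLM.integral_comp_comm
      (integrableOn_ofReal_mul_inv_sub_sub_inv_two_mul hint1 hint2 hz)]
    simp only [imCLM_apply, im_ofReal_mul_inv_sub_sub_inv_two_mul]
  rw [hδ, Complex.norm_exp, neg_mul, neg_re, I_mul_re, neg_neg, him]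
  refine sqrt_le_exp_and_exp_le_inv_sqrt hq ?_
  calc _ ≤ -Real.log (1 - ρ ^ 2) / (2 * π) * π :=
        abs_setIntegral_mul_im_inv_ofReal_sub_le hΓ
          (div_nonneg (neg_nonneg.mpr (Real.log_nonpos hq.le (by nlinarith))) (by positivity))
          hνc hz
    _ = -Real.log (1 - ρ ^ 2) / 2 := by field_simp

/-- Uniform bound for the partial transmission function: if |r| ≤ ρ < 1 on Γ and
δ(z) = exp(−i ∫_Γ ν(s)(1/(s−z) − 1/(2s)) ds) with ν(s) = −(1/(2π)) log(1 − |r(s)|²),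
then (1 − ρ²)^{1/2} ≤ |δ(z)| ≤ (1 − ρ²)^{−1/2} for all z off the real axis. -/
theorem stmt_11 (Γ : Set ℝ) (hΓ : MeasurableSet Γ) (ρ : ℝ) (hρ0 : 0 ≤ ρ) (hρ1 : ρ < 1)
    (r : ℝ → ℂ) (hr : Measurable r) (hrρ : ∀ s ∈ Γ, ‖r s‖ ≤ ρ)
    (ν : ℝ → ℝ)
    (hν : ν = fun s => -(1/(2*Real.pi)) * Real.log (1 - ‖r s‖^2))
    (hint1 : IntegrableOn ν Γ)
    (hint2 : IntegrableOn (fun s => ν s / s) Γ)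
    (δ : ℂ → ℂ)
    (hδ : δ = fun z => Complex.exp (-Complex.I *
      ∫ s in Γ, (ν s : ℂ) * (1/((s : ℂ) - z) - 1/(2*(s : ℂ)))))
    (z : ℂ) (hz : z.im ≠ 0) :
    Real.sqrt (1 - ρ^2) ≤ ‖δ z‖ ∧
      ‖δ z‖ ≤ (Real.sqrt (1 - ρ^2))⁻¹ :=
  stmt_11_general Γ hΓ ρ hρ0 hρ1 r hrρ ν hν hint1 hint2 δ hδ z hz
end
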